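/- arXiv:1210.2951 — 8 statements merged into one kernel-verified Lean document; each statement's English description precedes it below -/
import Mathlib

section
/- Let F be a vector space over a field K, let T : F → F be a surjective linear map, let B ≤ F* be a finite-dimensional subspace, and let G : F → F be a linear right inverse of T (i.e., T ∘ G = id_F). Then (T(B^⊥))^⊥ = G*(B ∩ (Ker T)^⊥), where G* : F* → F* is the transpose of G. -/
/-!
Since `B` is finite-dimensional, `(B^⊥)^⊥ = B`, so `(T(B^⊥))^⊥` is the preimage of `B`
under `T*`. As `G* ∘ T* = (T ∘ G)* = id`, this preimage is the image under `G*` of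
`B ∩ range T*`, and `range T* = (Ker T)^⊥` over a field.
-/

theorem Submodule.dualAnnihilator_map_eq_comap_dualMap {R M N : Type*} [CommSemiring R]
    [AddCommMonoid M] [Module R M] [AddCommMonoid N] [Module R N]
    (f : M →ₗ[R] N) (U : Submodule R M) :
    (U.map f).dualAnnihilator = U.dualAnnihilator.comap f.dualMap := by
  ext φ
  simp [Submodule.mem_dualAnnihilator]

theorem Submodule.comap_eq_map_inf_range_of_leftInverse {R M N : Type*} [Semiring R]
    [AddCommMonoid M] [Module R M] [AddCommMonoid N] [Module R N]
    {f : M →ₗ[R] N} {g : N →ₗ[R] M} (hgf : Function.LeftInverse g f) (p : Submodule R N) :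
    p.comap f = (p ⊓ LinearMap.range f).map g := by
  ext x
  constructor
  · intro hx
    exact ⟨f x, ⟨hx, x, rfl⟩, hgf x⟩
  · rintro ⟨_, ⟨hy, y, rfl⟩, rfl⟩
    rwa [Submodule.mem_comap, hgf y]

theorem LinearMap.leftInverse_dualMap_of_rightInverse {R M N : Type*} [CommSemiring R]
    [AddCommMonoid M] [Module R M] [AddCommMonoid N] [Module R N]
    {f : M →ₗ[R] N} {g : N →ₗ[R] M} (hfg : f ∘ₗ g = LinearMap.id) :
    Function.LeftInverse g.dualMap f.dualMap := fun φ => by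
  rw [← LinearMap.comp_apply, LinearMap.dualMap_comp_dualMap, hfg, LinearMap.dualMap_id,
    LinearMap.id_apply]

theorem stmt1_general {K F : Type*} [Field K] [AddCommGroup F] [Module K F]
    (T : F →ₗ[K] F)
    (B : Submodule K (Module.Dual K F)) (hB : FiniteDimensional K B)
    (G : F →ₗ[K] F) (hG : T ∘ₗ G = LinearMap.id) :
    (Submodule.map T B.dualCoannihilator).dualAnnihilator =
      Submodule.map G.dualMap (B ⊓ (LinearMap.ker T).dualAnnihilator) := by
  rw [Submodule.dualAnnihilator_map_eq_comap_dualMap,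
    Subspace.dualCoannihilator_dualAnnihilator_eq, Submodule.comap_eq_map_inf_range_of_leftInverse
      (LinearMap.leftInverse_dualMap_of_rightInverse hG),
    LinearMap.range_dualMap_eq_dualAnnihilator_ker]

/-- For a surjective linear map T : F → F, a finite-dimensional subspace
B ≤ F*, and a linear right inverse G of T, we have
(T(B^⊥))^⊥ = G*(B ∩ (Ker T)^⊥). -/
theorem stmt1 {K F : Type*} [Field K] [AddCommGroup F] [Module K F]
    (T : F →ₗ[K] F) (hT : Function.Surjective T)
    (B : Submodule K (Module.Dual K F)) (hB : FiniteDimensional K B)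
    (G : F →ₗ[K] F) (hG : T ∘ₗ G = LinearMap.id) :
    (Submodule.map T B.dualCoannihilator).dualAnnihilator =
      Submodule.map G.dualMap (B ⊓ (LinearMap.ker T).dualAnnihilator) :=
  stmt1_general T B hB G hG
end

section
/- Let F be a vector space over a field K, let T : F → F be a surjective linear map whose kernel has a basis u_1, …, u_n, and let β_1, …, β_m ∈ F* be linearly independent with span B such that the m×n evaluation matrix M = (β_i(u_j)) has full column rank. Let N be an n×m matrix over K with N·M = 1_n (a left inverse of M), and define β̃_i = Σ_{j=1}^m N_{ij} β_j for i = 1, …, n, with span B̃ ≤ B. Then the boundary problem (T, B̃) is regular, i.e., F = Ker T ∔ B̃^⊥. -/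
open Module Submodule

namespace Submodule

variable {R M : Type*} [CommRing R] [AddCommGroup M] [Module R M]

theorem dualCoannihilator_span_range_eq_ker_pi {ι : Type*} (φ : ι → Dual R M) :
    (span R (Set.range φ)).dualCoannihilator = LinearMap.ker (LinearMap.pi φ) := by
  ext x
  rw [← SetLike.mem_coe, coe_dualCoannihilator_span, Set.mem_ofPred_eq, Set.forall_mem_range,
    LinearMap.mem_ker, funext_iff]
  rfl

/-- The map `v ↦ ∑ i, φ i v • u i` is a projection onto `W` with kernel the common zero set of
the `φ i`. -/
theorem isCompl_dualCoannihilator_of_biorthogonal {ι : Type*} [Fintype ι] [DecidableEq ι]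
    {W : Submodule R M} (u : Basis ι R W) (φ : ι → Dual R M)
    (hφu : ∀ i j, φ i (u j) = if i = j then 1 else 0) :
    IsCompl W (span R (Set.range φ)).dualCoannihilator := by
  set P : M →ₗ[R] W := u.equivFun.symm.toLinearMap ∘ₗ LinearMap.pi φ
  have hP : ∀ w : W, P w = w := by
    have : P ∘ₗ W.subtype = LinearMap.id := u.ext fun j => by simp [P, hφu]
    exact LinearMap.congr_fun this
  rw [dualCoannihilator_span_range_eq_ker_pi, ← LinearEquiv.ker_comp u.equivFun.symm]
  exact LinearMap.isCompl_of_proj hP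

end Submodule

theorem stmt3_general {K F : Type*} [Field K] [AddCommGroup F] [Module K F]
    {n m : ℕ} (T : F →ₗ[K] F)
    (u : Module.Basis (Fin n) K (LinearMap.ker T))
    (β : Fin m → Module.Dual K F)
    (B : Submodule K (Module.Dual K F)) (hB : B = Submodule.span K (Set.range β))
    (M : Matrix (Fin m) (Fin n) K) (hM : ∀ i j, M i j = β i (u j : F))
    (N : Matrix (Fin n) (Fin m) K) (hN : N * M = 1)
    (βt : Fin n → Module.Dual K F) (hβt : ∀ i, βt i = ∑ j, N i j • β j)
    (Bt : Submodule K (Module.Dual K F)) (hBt : Bt = Submodule.span K (Set.range βt)) :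
    Bt ≤ B ∧ IsCompl (LinearMap.ker T) Bt.dualCoannihilator := by
  subst hB hBt
  have hbiorth : ∀ i j, βt i (u j) = if i = j then 1 else 0 := fun i j => by
    rw [← Matrix.one_apply, ← hN, Matrix.mul_apply, hβt]
    simp [hM]
  refine ⟨span_le.2 ?_, isCompl_dualCoannihilator_of_biorthogonal u βt hbiorth⟩
  rintro _ ⟨i, rfl⟩
  rw [hβt]
  exact sum_smul_mem _ _ fun j _ => subset_span ⟨j, rfl⟩

/-- Let T : F → F be surjective with Ker T having basis u_1,…,u_n, and
β_1,…,β_m ∈ F* linearly independent with span B such that the evaluation matrix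
M = (β_i(u_j)) has full column rank. If N·M = 1_n and β̃_i = Σ_j N_{ij} β_j with span B̃,
then B̃ ≤ B and the boundary problem (T, B̃) is regular, i.e. F = Ker T ∔ B̃^⊥. -/
theorem stmt3 {K F : Type*} [Field K] [AddCommGroup F] [Module K F]
    {n m : ℕ} (T : F →ₗ[K] F) (hT : Function.Surjective T)
    (u : Module.Basis (Fin n) K (LinearMap.ker T))
    (β : Fin m → Module.Dual K F) (hβ : LinearIndependent K β)
    (B : Submodule K (Module.Dual K F)) (hB : B = Submodule.span K (Set.range β))
    (M : Matrix (Fin m) (Fin n) K) (hM : ∀ i j, M i j = β i (u j : F))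
    (hrank : M.rank = n)
    (N : Matrix (Fin n) (Fin m) K) (hN : N * M = 1)
    (βt : Fin n → Module.Dual K F) (hβt : ∀ i, βt i = ∑ j, N i j • β j)
    (Bt : Submodule K (Module.Dual K F)) (hBt : Bt = Submodule.span K (Set.range βt)) :
    Bt ≤ B ∧ IsCompl (LinearMap.ker T) Bt.dualCoannihilator :=
  stmt3_general T u β B hB M hM N hN βt hβt Bt hBt
end

section
/- Let F be a vector space over a field K, T : F → F a surjective linear map, B ≤ F* a finite-dimensional subspace with B^⊥ ∩ Ker T = {0}, and E ≤ F a subspace with F = T(B^⊥) ∔ E; let Q : F → F be the projection onto T(B^⊥) along E. Let B̃ ≤ B be a subspace with F = Ker T ∔ B̃^⊥, and let G̃ : F → F be the Green's operator of the regular boundary problem (T, B̃), i.e., the linear map satisfying T(G̃f) = f and G̃f ∈ B̃^⊥ for all f ∈ F. Then for every f ∈ F, the element G̃(Qf) lies in B^⊥ and satisfies T(G̃(Qf)) = Qf; moreover it is the unique element u ∈ B^⊥ with Tu = Qf. Hence G̃ ∘ Q is the generalized Green's operator of (T, B, E). -/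
/-! Since `B̃ ≤ B`, we have `B^⊥ ≤ B̃^⊥`, and `T` is injective on `B̃^⊥` because
`Ker T ∩ B̃^⊥ = 0`. So on `B̃^⊥`, and a fortiori on `B^⊥`, `G̃` is the inverse of `T`: the
preimage `G̃(Qf)` of `Qf ∈ T(B^⊥)` must be the element of `B^⊥` that `T` maps to `Qf`. -/

theorem LinearMap.mem_of_mem_map_of_injOn {R M M₂ : Type*} [Semiring R] [AddCommMonoid M]
    [AddCommMonoid M₂] [Module R M] [Module R M₂] {f : M →ₗ[R] M₂} {p s : Submodule R M}
    (hps : p ≤ s) (hinj : Set.InjOn f s) {x : M} (hx : x ∈ s) (hfx : f x ∈ p.map f) :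
    x ∈ p := by
  obtain ⟨y, hy, hfy⟩ := hfx
  rwa [← hinj (hps hy) hx hfy]

theorem stmt4_general {K F : Type*} [Field K] [AddCommGroup F] [Module K F]
    (T : F →ₗ[K] F)
    (B : Submodule K (Module.Dual K F))
    (E : Submodule K F)
    (Q : F →ₗ[K] F)
    (hQ : ∀ f, Q f ∈ Submodule.map T B.dualCoannihilator ∧ f - Q f ∈ E)
    (Bt : Submodule K (Module.Dual K F)) (hBtB : Bt ≤ B)
    (hreg : IsCompl (LinearMap.ker T) Bt.dualCoannihilator)
    (Gt : F →ₗ[K] F)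
    (hGt : ∀ f, T (Gt f) = f ∧ Gt f ∈ Bt.dualCoannihilator) :
    ∀ f, Gt (Q f) ∈ B.dualCoannihilator ∧ T (Gt (Q f)) = Q f ∧
      ∀ u ∈ B.dualCoannihilator, T u = Q f → u = Gt (Q f) := by
  intro f
  have hsub : B.dualCoannihilator ≤ Bt.dualCoannihilator :=
    Submodule.dualCoannihilator_anti hBtB
  have hinj : Set.InjOn T Bt.dualCoannihilator :=
    LinearMap.injOn_of_disjoint_ker le_rfl hreg.disjoint.symm
  obtain ⟨hTG, hGBt⟩ := hGt (Q f)
  refine ⟨?_, hTG, fun u hu hTu => hinj (hsub hu) hGBt (hTu.trans hTG.symm)⟩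
  refine LinearMap.mem_of_mem_map_of_injOn hsub hinj hGBt ?_
  rw [hTG]
  exact (hQ f).1

/-- Let (T, B, E) be a regular generalized boundary problem, Q the
projection onto T(B^⊥) along E, B̃ ≤ B with (T, B̃) regular, and G̃ the Green's operator
of (T, B̃). Then for every f, G̃(Qf) ∈ B^⊥ and T(G̃(Qf)) = Qf, and G̃(Qf) is the unique
such element; hence G̃ ∘ Q is the generalized Green's operator of (T, B, E). -/
theorem stmt4 {K F : Type*} [Field K] [AddCommGroup F] [Module K F]
    (T : F →ₗ[K] F) (hT : Function.Surjective T)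
    (B : Submodule K (Module.Dual K F)) (hB : FiniteDimensional K B)
    (huniq : B.dualCoannihilator ⊓ LinearMap.ker T = ⊥)
    (E : Submodule K F) (hE : IsCompl (Submodule.map T B.dualCoannihilator) E)
    (Q : F →ₗ[K] F)
    (hQ : ∀ f, Q f ∈ Submodule.map T B.dualCoannihilator ∧ f - Q f ∈ E)
    (Bt : Submodule K (Module.Dual K F)) (hBtB : Bt ≤ B)
    (hreg : IsCompl (LinearMap.ker T) Bt.dualCoannihilator)
    (Gt : F →ₗ[K] F)
    (hGt : ∀ f, T (Gt f) = f ∧ Gt f ∈ Bt.dualCoannihilator) :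
    ∀ f, Gt (Q f) ∈ B.dualCoannihilator ∧ T (Gt (Q f)) = Q f ∧
      ∀ u ∈ B.dualCoannihilator, T u = Q f → u = Gt (Q f) :=
  stmt4_general T B E Q hQ Bt hBtB hreg Gt hGt
end

section
/- Let F be a vector space over a field K, let T : F → F be a surjective linear map whose kernel is n-dimensional with basis u_1, …, u_n, and let B ≤ F* be a subspace with basis β_1, …, β_n. Then F = Ker T ∔ B^⊥ (i.e., the boundary problem (T, B) is regular) if and only if the n×n evaluation matrix β(u) = (β_i(u_j)) over K is invertible. -/
/-!
Evaluation at the basis `β` of `B` is a linear map `φ : F → Kⁿ` with kernel `B^⊥`. A subspace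
`N` complementing `ker φ` meets it trivially, and conversely `N` complements `ker φ` as soon as
`φ` restricts to an isomorphism `N ≃ Kⁿ`; when `dim N = n`, injectivity of `φ` on `N` decides.
In the basis `u` of `N = Ker T`, the restriction of `φ` is multiplication by `β(u)`.
-/

open Module Function LinearMap

section CommRing

variable {R F V : Type*} [CommRing R] [AddCommGroup F] [Module R F] [AddCommGroup V] [Module R V]

-- The inverse of `φ` on `N`, composed with `φ`, is a projection of `F` onto `N` along `ker φ`.
theorem LinearMap.isCompl_ker_of_bijective_domRestrict {φ : F →ₗ[R] V} {N : Submodule R F}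
    (h : Bijective (φ.domRestrict N)) : IsCompl N (ker φ) := by
  let e := LinearEquiv.ofBijective _ h
  have := isCompl_of_proj (f := e.symm.toLinearMap ∘ₗ φ) e.symm_apply_apply
  rwa [LinearEquiv.ker_comp] at this

theorem LinearMap.ker_pi_eq_dualCoannihilator_span {ι : Type*} (f : ι → Dual R F) :
    ker (pi f) = (Submodule.span R (Set.range f)).dualCoannihilator := by
  refine SetLike.ext' ?_
  rw [Submodule.coe_dualCoannihilator_span]
  ext x
  simp [funext_iff]

theorem Module.Basis.span_range_coe {ι : Type*} {B : Submodule R F} (b : Basis ι R B) :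
    Submodule.span R (Set.range fun i => (b i : F)) = B := by
  change Submodule.span R (Set.range (B.subtype ∘ b)) = B
  rw [Set.range_comp, Submodule.span_image, b.span_eq, Submodule.map_subtype_top]

end CommRing

section Field

variable {K F : Type*} [Field K] [AddCommGroup F] [Module K F]

theorem LinearMap.isCompl_ker_iff_injective_domRestrict {V : Type*} [AddCommGroup V] [Module K V]
    {φ : F →ₗ[K] V} {N : Submodule K F} [FiniteDimensional K N] [FiniteDimensional K V]
    (h : finrank K N = finrank K V) :
    IsCompl N (ker φ) ↔ Injective (φ.domRestrict N) := by
  refine ⟨fun hc => injective_domRestrict_iff.2 hc.disjoint, fun hinj => ?_⟩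
  exact isCompl_ker_of_bijective_domRestrict
    ⟨hinj, (injective_iff_surjective_of_finrank_eq_finrank h).1 hinj⟩

theorem Matrix.mulVec_of_eval_basis {ι : Type*} [Fintype ι] {N : Submodule K F}
    (u : Basis ι K N) (f : ι → Dual K F) :
    (Matrix.of fun i j => f i (u j)).mulVec = (pi f).domRestrict N ∘ u.equivFun.symm := by
  ext x i
  simp [Matrix.mulVec, dotProduct, Basis.equivFun_symm_apply, mul_comm]

theorem LinearMap.injective_pi_domRestrict_iff_isUnit {ι : Type*} [Fintype ι] [DecidableEq ι]
    {N : Submodule K F} (u : Basis ι K N) (f : ι → Dual K F) :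
    Injective ((pi f).domRestrict N) ↔ IsUnit (Matrix.of fun i j => f i (u j)) := by
  rw [← Matrix.mulVec_injective_iff_isUnit, Matrix.mulVec_of_eval_basis, EquivLike.injective_comp]

end Field

theorem stmt5_general {K F : Type*} [Field K] [AddCommGroup F] [Module K F]
    {n : ℕ} (T : F →ₗ[K] F)
    (u : Module.Basis (Fin n) K (LinearMap.ker T))
    (B : Submodule K (Module.Dual K F)) (β : Module.Basis (Fin n) K B)
    (M : Matrix (Fin n) (Fin n) K) (hM : ∀ i j, M i j = (β i : Module.Dual K F) (u j : F)) :
    IsCompl (LinearMap.ker T) B.dualCoannihilator ↔ IsUnit M := by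
  obtain rfl : M = Matrix.of fun i j => (β i : Dual K F) (u j) := Matrix.ext hM
  have : FiniteDimensional K (ker T) := .of_basis u
  have hker : B.dualCoannihilator = ker (pi fun i => (β i : Dual K F)) := by
    rw [ker_pi_eq_dualCoannihilator_span, β.span_range_coe]
  rw [hker, isCompl_ker_iff_injective_domRestrict (by simp [finrank_eq_card_basis u]),
    injective_pi_domRestrict_iff_isUnit]

/-- Let T : F → F be surjective with n-dimensional kernel having basis
u_1,…,u_n, and let B ≤ F* have basis β_1,…,β_n. Then F = Ker T ∔ B^⊥ iff the n×n
evaluation matrix β(u) = (β_i(u_j)) is invertible. -/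
theorem stmt5 {K F : Type*} [Field K] [AddCommGroup F] [Module K F]
    {n : ℕ} (T : F →ₗ[K] F) (hT : Function.Surjective T)
    (u : Module.Basis (Fin n) K (LinearMap.ker T))
    (B : Submodule K (Module.Dual K F)) (β : Module.Basis (Fin n) K B)
    (M : Matrix (Fin n) (Fin n) K) (hM : ∀ i j, M i j = (β i : Module.Dual K F) (u j : F)) :
    IsCompl (LinearMap.ker T) B.dualCoannihilator ↔ IsUnit M :=
  stmt5_general T u B β M hM
end

section
/- Let (T_1, B_1) and (T_2, B_2) be regular boundary problems on a vector space F over a field K, with Green's operators G_1 and G_2 respectively. Then the composite boundary problem (T_1 ∘ T_2, T_2*(B_1) + B_2) is a regular boundary problem, and its Green's operator is G_2 ∘ G_1. -/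
namespace Submodule

variable {R M N : Type*} [CommRing R] [AddCommGroup M] [Module R M] [AddCommGroup N] [Module R N]

theorem dualCoannihilator_map_dualMap (f : M →ₗ[R] N) (B : Submodule R (Module.Dual R N)) :
    (B.map f.dualMap).dualCoannihilator = B.dualCoannihilator.comap f := by
  ext v
  simp only [mem_dualCoannihilator, mem_comap, mem_map, forall_exists_index, and_imp,
    forall_apply_eq_imp_iff₂, LinearMap.dualMap_apply]

theorem dualCoannihilator_map_dualMap_sup (f : M →ₗ[R] N) (B₁ : Submodule R (Module.Dual R N))
    (B₂ : Submodule R (Module.Dual R M)) :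
    (B₁.map f.dualMap ⊔ B₂).dualCoannihilator =
      B₁.dualCoannihilator.comap f ⊓ B₂.dualCoannihilator := by
  rw [dualCoannihilator_sup_eq, dualCoannihilator_map_dualMap]

end Submodule

namespace LinearMap

variable {R M N P : Type*} [Ring R] [AddCommGroup M] [Module R M] [AddCommGroup N] [Module R N]
  [AddCommGroup P] [Module R P]

theorem disjoint_ker_comp {T₁ : N →ₗ[R] P} {T₂ : M →ₗ[R] N} {U₁ : Submodule R N}
    {U₂ : Submodule R M} (h₁ : Disjoint (ker T₁) U₁) (h₂ : Disjoint (ker T₂) U₂) :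
    Disjoint (ker (T₁ ∘ₗ T₂)) (U₁.comap T₂ ⊓ U₂) := by
  rw [disjoint_iff_inf_le]
  rintro u ⟨hker, hu₁, hu₂⟩
  have hT₂u : T₂ u = 0 := (disjoint_iff_inf_le.mp h₁) ⟨hker, hu₁⟩
  exact (disjoint_iff_inf_le.mp h₂) ⟨hT₂u, hu₂⟩

theorem codisjoint_ker_of_rightInverse {T : M →ₗ[R] N} {G : N →ₗ[R] M} {U : Submodule R M}
    (hG : ∀ f, T (G f) = f ∧ G f ∈ U) : Codisjoint (ker T) U := by
  rw [codisjoint_iff_le_sup]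
  intro f _
  have hker : f - G (T f) ∈ ker T := by simp [(hG _).1]
  simpa using Submodule.add_mem_sup hker (hG (T f)).2

theorem comp_rightInverse_mem_comap_inf {T₁ : N →ₗ[R] P} {T₂ : M →ₗ[R] N}
    {G₁ : P →ₗ[R] N} {G₂ : N →ₗ[R] M} {U₁ : Submodule R N} {U₂ : Submodule R M}
    (hG₁ : ∀ f, T₁ (G₁ f) = f ∧ G₁ f ∈ U₁) (hG₂ : ∀ f, T₂ (G₂ f) = f ∧ G₂ f ∈ U₂) (f : P) :
    (T₁ ∘ₗ T₂) ((G₂ ∘ₗ G₁) f) = f ∧ (G₂ ∘ₗ G₁) f ∈ U₁.comap T₂ ⊓ U₂ := by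
  refine ⟨by simp [(hG₂ _).1, (hG₁ _).1], ?_, (hG₂ _).2⟩
  show T₂ (G₂ (G₁ f)) ∈ U₁
  exact (hG₂ _).1 ▸ (hG₁ _).2

end LinearMap

theorem stmt6_general {K F : Type*} [Field K] [AddCommGroup F] [Module K F]
    (T₁ T₂ : F →ₗ[K] F)
    (B₁ B₂ : Submodule K (Module.Dual K F))
    (hB₁ : FiniteDimensional K B₁) (hB₂ : FiniteDimensional K B₂)
    (hreg₁ : IsCompl (LinearMap.ker T₁) B₁.dualCoannihilator)
    (hreg₂ : IsCompl (LinearMap.ker T₂) B₂.dualCoannihilator)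
    (G₁ G₂ : F →ₗ[K] F)
    (hG₁ : ∀ f, T₁ (G₁ f) = f ∧ G₁ f ∈ B₁.dualCoannihilator)
    (hG₂ : ∀ f, T₂ (G₂ f) = f ∧ G₂ f ∈ B₂.dualCoannihilator) :
    Function.Surjective (T₁ ∘ₗ T₂) ∧
    FiniteDimensional K (Submodule.map T₂.dualMap B₁ ⊔ B₂ : Submodule K (Module.Dual K F)) ∧
    IsCompl (LinearMap.ker (T₁ ∘ₗ T₂))
      (Submodule.map T₂.dualMap B₁ ⊔ B₂).dualCoannihilator ∧
    ∀ f, (T₁ ∘ₗ T₂) ((G₂ ∘ₗ G₁) f) = f ∧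
      (G₂ ∘ₗ G₁) f ∈ (Submodule.map T₂.dualMap B₁ ⊔ B₂).dualCoannihilator := by
  rw [Submodule.dualCoannihilator_map_dualMap_sup]
  have hG := LinearMap.comp_rightInverse_mem_comap_inf hG₁ hG₂
  refine ⟨fun f ↦ ⟨_, (hG f).1⟩, Submodule.finiteDimensional_sup _ _,
    ⟨LinearMap.disjoint_ker_comp hreg₁.disjoint hreg₂.disjoint,
      LinearMap.codisjoint_ker_of_rightInverse hG⟩, hG⟩

/-- If (T_1, B_1) and (T_2, B_2) are regular boundary problems with Green's
operators G_1, G_2, then (T_1 ∘ T_2, T_2*(B_1) + B_2) is a regular boundary problem with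
Green's operator G_2 ∘ G_1. -/
theorem stmt6 {K F : Type*} [Field K] [AddCommGroup F] [Module K F]
    (T₁ T₂ : F →ₗ[K] F) (hT₁ : Function.Surjective T₁) (hT₂ : Function.Surjective T₂)
    (B₁ B₂ : Submodule K (Module.Dual K F))
    (hB₁ : FiniteDimensional K B₁) (hB₂ : FiniteDimensional K B₂)
    (hreg₁ : IsCompl (LinearMap.ker T₁) B₁.dualCoannihilator)
    (hreg₂ : IsCompl (LinearMap.ker T₂) B₂.dualCoannihilator)
    (G₁ G₂ : F →ₗ[K] F)
    (hG₁ : ∀ f, T₁ (G₁ f) = f ∧ G₁ f ∈ B₁.dualCoannihilator)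
    (hG₂ : ∀ f, T₂ (G₂ f) = f ∧ G₂ f ∈ B₂.dualCoannihilator) :
    Function.Surjective (T₁ ∘ₗ T₂) ∧
    FiniteDimensional K (Submodule.map T₂.dualMap B₁ ⊔ B₂ : Submodule K (Module.Dual K F)) ∧
    IsCompl (LinearMap.ker (T₁ ∘ₗ T₂))
      (Submodule.map T₂.dualMap B₁ ⊔ B₂).dualCoannihilator ∧
    ∀ f, (T₁ ∘ₗ T₂) ((G₂ ∘ₗ G₁) f) = f ∧
      (G₂ ∘ₗ G₁) f ∈ (Submodule.map T₂.dualMap B₁ ⊔ B₂).dualCoannihilator :=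
  stmt6_general T₁ T₂ B₁ B₂ hB₁ hB₂ hreg₁ hreg₂ G₁ G₂ hG₁ hG₂
end

section
/- Let (T, B) be a regular boundary problem on a vector space F over a field K, and suppose T = T_1 ∘ T_2 where T_1, T_2 : F → F are surjective linear maps with finite-dimensional kernels. Then there exist finite-dimensional subspaces B_1, B_2 ≤ F* with B_2 ≤ B such that the boundary problems (T_1, B_1) and (T_2, B_2) are regular and (T, B) = (T_1, B_1) ∘ (T_2, B_2), i.e., T_2*(B_1) + B_2 = B. -/
/-! Put N = ker T, so that ker T₂ ≤ N and ker T₁ = T₂(N). Split B = B' ⊕ B₂, where B' consists of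
the conditions vanishing on ker T₂; as T₂ is surjective, B' lies in the range of the injective map
T₂*, so B' = T₂*(B₁) with B₁ = (T₂*)⁻¹(B'). For finite-dimensional B, `F = N ∔ B^⊥` amounts to
`N ∩ B^⊥ = 0` together with `B ∩ N^0 = 0`, because `B^⊥^0 = B`; both conditions pass from (N, B)
to (ker T₂, B₂) and to (ker T₁, B₁) by lattice arguments. -/

open Module Submodule

section

variable {K F G : Type*} [Field K] [AddCommGroup F] [Module K F] [AddCommGroup G] [Module K G]

theorem Submodule.codisjoint_dualCoannihilator_iff (N : Submodule K F)
    (B : Submodule K (Dual K F)) [FiniteDimensional K B] :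
    Codisjoint N B.dualCoannihilator ↔ Disjoint N.dualAnnihilator B := by
  rw [codisjoint_iff, disjoint_iff, ← dualAnnihilator_eq_bot_iff, dualAnnihilator_sup_eq,
    Subspace.dualCoannihilator_dualAnnihilator_eq]

theorem Submodule.finiteDimensional_comap_of_injective {f : F →ₗ[K] G}
    (hf : Function.Injective f) (q : Submodule K G) [FiniteDimensional K q] :
    FiniteDimensional K (q.comap f) :=
  FiniteDimensional.of_injective (f.restrict fun _ hx ↦ hx) fun _ _ h ↦
    Subtype.ext (hf (congrArg Subtype.val h))

theorem inf_dualAnnihilator_ker_le_range_dualMap {S : F →ₗ[K] G} (hS : Function.Surjective S)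
    (B : Submodule K (Dual K F)) :
    B ⊓ (LinearMap.ker S).dualAnnihilator ≤ LinearMap.range S.dualMap :=
  (LinearMap.range_dualMap_eq_dualAnnihilator_ker_of_surjective S hS).symm ▸ inf_le_right

variable {N M : Submodule K F} {B B₂ : Submodule K (Dual K F)}

theorem isCompl_dualCoannihilator_of_le [FiniteDimensional K B]
    (hreg : IsCompl N B.dualCoannihilator) (hMN : M ≤ N)
    (hdisj : Disjoint (B ⊓ M.dualAnnihilator) B₂) (hsup : B ⊓ M.dualAnnihilator ⊔ B₂ = B) :
    IsCompl M B₂.dualCoannihilator := by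
  have hB₂ : B₂ ≤ B := hsup ▸ le_sup_right
  have : FiniteDimensional K B₂ := finiteDimensional_of_le hB₂
  constructor
  · have hM : M ≤ (B ⊓ M.dualAnnihilator).dualCoannihilator :=
      le_dualAnnihilator_iff_le_dualCoannihilator.mp inf_le_right
    refine disjoint_iff_inf_le.mpr
      ((le_inf (inf_le_left.trans hMN) ?_).trans hreg.disjoint.le_bot)
    rw [← hsup, dualCoannihilator_sup_eq]
    exact inf_le_inf_right _ hM
  · rw [codisjoint_dualCoannihilator_iff]
    exact disjoint_iff_inf_le.mpr
      ((le_inf (le_inf (inf_le_right.trans hB₂) inf_le_left) inf_le_right).trans hdisj.le_bot)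

theorem inf_dualCoannihilator_eq_of_codisjoint (hreg : Disjoint N B.dualCoannihilator)
    (hMN : M ≤ N) (hsup : B ⊓ M.dualAnnihilator ⊔ B₂ = B)
    (hcod : Codisjoint M B₂.dualCoannihilator) :
    N ⊓ (B ⊓ M.dualAnnihilator).dualCoannihilator = M := by
  set B' := B ⊓ M.dualAnnihilator
  have hM : M ≤ B'.dualCoannihilator :=
    le_dualAnnihilator_iff_le_dualCoannihilator.mp inf_le_right
  calc N ⊓ B'.dualCoannihilator
      = (M ⊔ B₂.dualCoannihilator) ⊓ (N ⊓ B'.dualCoannihilator) := by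
        rw [hcod.eq_top, top_inf_eq]
    _ = M ⊔ B₂.dualCoannihilator ⊓ (N ⊓ B'.dualCoannihilator) :=
        sup_inf_assoc_of_le _ (le_inf hMN hM)
    _ = M ⊔ N ⊓ B.dualCoannihilator := by
        rw [← hsup, dualCoannihilator_sup_eq, inf_comm B'.dualCoannihilator, inf_left_comm]
    _ = M := by rw [hreg.eq_bot, sup_bot_eq]

theorem isCompl_map_dualCoannihilator_comap_dualMap [FiniteDimensional K B]
    {S : F →ₗ[K] G} (hS : Function.Surjective S) (hreg : IsCompl N B.dualCoannihilator)
    (hker : N ⊓ (B ⊓ (LinearMap.ker S).dualAnnihilator).dualCoannihilator ≤ LinearMap.ker S) :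
    IsCompl (N.map S)
      ((B ⊓ (LinearMap.ker S).dualAnnihilator).comap S.dualMap).dualCoannihilator := by
  set B' := B ⊓ (LinearMap.ker S).dualAnnihilator
  have hB' : B' ≤ LinearMap.range S.dualMap := inf_dualAnnihilator_ker_le_range_dualMap hS B
  have hinj := LinearMap.dualMap_injective_of_surjective hS
  have : FiniteDimensional K B' := finiteDimensional_of_le inf_le_left
  have : FiniteDimensional K (B'.comap S.dualMap) := finiteDimensional_comap_of_injective hinj B'
  constructor
  · rw [disjoint_def]
    rintro _ ⟨v, hv, rfl⟩ hSv
    refine hker ⟨hv, (mem_dualCoannihilator _).mpr fun β hβ ↦ ?_⟩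
    obtain ⟨γ, rfl⟩ := hB' hβ
    exact (mem_dualCoannihilator _).mp hSv γ hβ
  · rw [codisjoint_dualCoannihilator_iff, disjoint_def]
    intro γ hγN hγB
    have hγ : S.dualMap γ ∈ N.dualAnnihilator := by
      rw [mem_dualAnnihilator] at hγN ⊢
      exact fun v hv ↦ hγN (S v) (mem_map_of_mem hv)
    have hNB := (codisjoint_dualCoannihilator_iff N B).mp hreg.codisjoint
    exact hinj ((disjoint_def.mp hNB _ hγ (mem_inf.mp hγB).1).trans (map_zero _).symm)

end

theorem stmt7_general {K F : Type*} [Field K] [AddCommGroup F] [Module K F]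
    (T T₁ T₂ : F →ₗ[K] F) (hfact : T = T₁ ∘ₗ T₂)
    (hT₂ : Function.Surjective T₂)
    (B : Submodule K (Module.Dual K F)) (hB : FiniteDimensional K B)
    (hreg : IsCompl (LinearMap.ker T) B.dualCoannihilator) :
    ∃ B₁ B₂ : Submodule K (Module.Dual K F),
      FiniteDimensional K B₁ ∧ FiniteDimensional K B₂ ∧ B₂ ≤ B ∧
      IsCompl (LinearMap.ker T₁) B₁.dualCoannihilator ∧
      IsCompl (LinearMap.ker T₂) B₂.dualCoannihilator ∧
      Submodule.map T₂.dualMap B₁ ⊔ B₂ = B := by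
  have hker₁ : LinearMap.ker T₁ = (LinearMap.ker T).map T₂ := by
    rw [hfact, LinearMap.ker_comp, map_comap_eq_of_surjective hT₂]
  have hker₂ : LinearMap.ker T₂ ≤ LinearMap.ker T := hfact ▸ LinearMap.ker_le_ker_comp T₂ T₁
  set B' := B ⊓ (LinearMap.ker T₂).dualAnnihilator
  obtain ⟨C, hC⟩ := B'.exists_isCompl
  have hdisj : Disjoint B' (B ⊓ C) := hC.disjoint.mono_right inf_le_right
  have hsup : B' ⊔ B ⊓ C = B := by
    rw [inf_comm B, ← sup_inf_assoc_of_le _ inf_le_left, hC.sup_eq_top, top_inf_eq]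
  have hreg₂ := isCompl_dualCoannihilator_of_le hreg hker₂ hdisj hsup
  refine ⟨B'.comap T₂.dualMap, B ⊓ C, ?_, finiteDimensional_of_le inf_le_left, inf_le_left,
    ?_, hreg₂, ?_⟩
  · have : FiniteDimensional K B' := finiteDimensional_of_le inf_le_left
    exact finiteDimensional_comap_of_injective (LinearMap.dualMap_injective_of_surjective hT₂) B'
  · rw [hker₁]
    exact isCompl_map_dualCoannihilator_comap_dualMap hT₂ hreg
      (inf_dualCoannihilator_eq_of_codisjoint hreg.disjoint hker₂ hsup hreg₂.codisjoint).le
  · rw [map_comap_eq_self (inf_dualAnnihilator_ker_le_range_dualMap hT₂ B), hsup]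

/-- Every factorization T = T_1 ∘ T_2 of the differential operator of a
regular boundary problem (T, B) lifts to a factorization (T, B) = (T_1, B_1) ∘ (T_2, B_2)
into regular boundary problems with B_2 ≤ B. -/
theorem stmt7 {K F : Type*} [Field K] [AddCommGroup F] [Module K F]
    (T T₁ T₂ : F →ₗ[K] F) (hfact : T = T₁ ∘ₗ T₂)
    (hT₁ : Function.Surjective T₁) (hT₂ : Function.Surjective T₂)
    (hker₁ : FiniteDimensional K (LinearMap.ker T₁))
    (hker₂ : FiniteDimensional K (LinearMap.ker T₂))
    (B : Submodule K (Module.Dual K F)) (hB : FiniteDimensional K B)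
    (hreg : IsCompl (LinearMap.ker T) B.dualCoannihilator) :
    ∃ B₁ B₂ : Submodule K (Module.Dual K F),
      FiniteDimensional K B₁ ∧ FiniteDimensional K B₂ ∧ B₂ ≤ B ∧
      IsCompl (LinearMap.ker T₁) B₁.dualCoannihilator ∧
      IsCompl (LinearMap.ker T₂) B₂.dualCoannihilator ∧
      Submodule.map T₂.dualMap B₁ ⊔ B₂ = B :=
  stmt7_general T T₁ T₂ hfact hT₂ B hB hreg
end

section
/- Let f : ℝ → ℝ be continuous and define u : ℝ → ℝ by u(x) = x·∫_0^x f(ξ) dξ − ∫_0^x ξ f(ξ) dξ − (1/2)(x² + 1)·∫_0^1 f(ξ) dξ + ∫_0^1 ξ f(ξ) dξ. Then u is twice differentiable and satisfies u''(x) = f(x) − ∫_0^1 f(ξ) dξ for all x ∈ ℝ, together with u'(0) = 0, u'(1) = 0 and u(1) = 0. -/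
/-!
Writing `F x = ∫₀ˣ f`, the first two terms of `u` differentiate to `F x + x f x - x f x = F x`,
so `u' x = F x - x F 1`. Hence `u'' = f - F 1`, `u' 0 = u' 1 = 0`, and in `u 1` the two copies of
each of `F 1` and `∫₀¹ ξ f ξ` cancel.
-/

theorem hasDerivAt_mul_integral_sub_integral_mul {f : ℝ → ℝ} (hf : Continuous f) (a x : ℝ) :
    HasDerivAt (fun y => y * (∫ ξ in a..y, f ξ) - ∫ ξ in a..y, ξ * f ξ)
      (∫ ξ in a..x, f ξ) x := by
  have hF := (hf.integral_hasStrictDerivAt a x).hasDerivAt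
  have hG : HasDerivAt (fun y => ∫ ξ in a..y, ξ * f ξ) (x * f x) x :=
    ((continuous_id.mul hf).integral_hasStrictDerivAt a x).hasDerivAt
  exact (((hasDerivAt_id' x).mul hF).sub hG).congr_deriv (by ring)

/-- For continuous f, the function
u(x) = x·∫_0^x f − ∫_0^x ξf(ξ)dξ − (1/2)(x²+1)·∫_0^1 f + ∫_0^1 ξf(ξ)dξ
is twice differentiable with u''(x) = f(x) − ∫_0^1 f, u'(0) = 0, u'(1) = 0 and u(1) = 0
(generalized Green's operator of the singular problem u'' = f, u'(0) = u'(1) = u(1) = 0). -/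
theorem stmt16 (f : ℝ → ℝ) (hf : Continuous f) (u : ℝ → ℝ)
    (hu : ∀ x, u x = x * (∫ ξ in (0:ℝ)..x, f ξ) - (∫ ξ in (0:ℝ)..x, ξ * f ξ)
        - (1/2) * (x^2 + 1) * (∫ ξ in (0:ℝ)..1, f ξ) + (∫ ξ in (0:ℝ)..1, ξ * f ξ)) :
    ∃ u' : ℝ → ℝ, (∀ x, HasDerivAt u (u' x) x) ∧
      (∀ x, HasDerivAt u' (f x - ∫ ξ in (0:ℝ)..1, f ξ) x) ∧
      u' 0 = 0 ∧ u' 1 = 0 ∧ u 1 = 0 := by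
  set C := ∫ ξ in (0:ℝ)..1, f ξ
  refine ⟨fun x => (∫ ξ in (0:ℝ)..x, f ξ) - x * C, fun x => ?_, fun x => ?_, by simp,
    by simp [C], by rw [hu 1]; ring⟩
  · rw [funext hu]
    exact (((hasDerivAt_mul_integral_sub_integral_mul hf 0 x).sub
      ((((hasDerivAt_pow 2 x).add_const 1).const_mul (1/2)).mul_const C)).add_const
      (∫ ξ in (0:ℝ)..1, ξ * f ξ)).congr_deriv (by ring)
  · exact (((hf.integral_hasStrictDerivAt 0 x).hasDerivAt).sub
      ((hasDerivAt_id' x).mul_const C)).congr_deriv (by ring)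
end

section
/- Let T : F → G be a linear map of vector spaces over a field K with transpose T* : G* → F*, and let B ≤ G* be an orthogonally closed subspace, i.e., B = (B^⊥)^⊥. Then the image T*(B) ≤ F* is orthogonally closed: T*(B) = ((T*(B))^⊥)^⊥. -/
/-!
If `U = B^⊥`, then `B = U^⊥` is the range of the transpose of `G → G ⧸ U`, so `T*(B)` is the
range of the transpose of `F → G → G ⧸ U`. Over a field the range of a transpose is the
annihilator of the kernel; hence `T*(B) = (T⁻¹ U)^⊥`, and every annihilator is orthogonally closed.
-/

namespace Submodule

variable {K V W : Type*} [Field K] [AddCommGroup V] [Module K V] [AddCommGroup W] [Module K W]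

theorem map_dualMap_dualAnnihilator (T : V →ₗ[K] W) (U : Submodule K W) :
    U.dualAnnihilator.map T.dualMap = (U.comap T).dualAnnihilator := by
  rw [← range_dualMap_mkQ_eq, ← LinearMap.range_comp, LinearMap.dualMap_comp_dualMap,
    LinearMap.range_dualMap_eq_dualAnnihilator_ker, LinearMap.ker_comp, ker_mkQ]

end Submodule

/-- The image of an orthogonally closed subspace B ≤ G* under the transpose
T* : G* → F* of a linear map T : F → G is orthogonally closed. -/
theorem stmt19 {K F G : Type*} [Field K] [AddCommGroup F] [Module K F]
    [AddCommGroup G] [Module K G]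
    (T : F →ₗ[K] G) (B : Submodule K (Module.Dual K G))
    (hB : B.dualCoannihilator.dualAnnihilator = B) :
    (Submodule.map T.dualMap B).dualCoannihilator.dualAnnihilator =
      Submodule.map T.dualMap B := by
  rw [← hB, Submodule.map_dualMap_dualAnnihilator,
    Submodule.dualAnnihilator_dualCoannihilator_dualAnnihilator]
end
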